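/- Quantum Bayes rule for upper conditioning: Let σ be a quantum state on ℂ^n and p, q predicates (effects) on ℂ^n with tr(σ p) ≠ 0 and tr(σ q) ≠ 0. Then σ|^p ⊨ q = ((σ|^q ⊨ p) * (σ ⊨ q)) / (σ ⊨ p), i.e. tr((√σ p √σ / tr(σ p)) * q) = (tr((√σ q √σ / tr(σ q)) * p) * tr(σ * q)) / tr(σ * p). -/

import Mathlib

open Matrix
open scoped ComplexOrder

namespace Matrix.PosSemidef

/-- The positive semidefinite square root of a positive semidefinite matrix
(the definition Mathlib had in December 2024, since removed). -/
noncomputable def sqrt {n 𝕜 : Type*} [Fintype n] [RCLike 𝕜] [DecidableEq n]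
    {A : Matrix n n 𝕜} (hA : PosSemidef A) : Matrix n n 𝕜 :=
  hA.1.eigenvectorUnitary.1 * diagonal ((↑) ∘ (√·) ∘ hA.1.eigenvalues) *
  (star hA.1.eigenvectorUnitary : Matrix n n 𝕜)

end Matrix.PosSemidef

/-! Both sides are `tr(√σ p √σ q) / tr(σ p)`: by cyclicity of the trace,
`tr(√σ p √σ q) = tr(√σ q √σ p)`, and the factor `tr(σ q)` on the right cancels. -/

theorem Matrix.trace_mul_mul_mul_comm {ι R : Type*} [Fintype ι] [CommSemiring R]
    (a p b q : Matrix ι ι R) : (a * p * b * q).trace = (b * q * a * p).trace := by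
  rw [Matrix.mul_assoc (a * p), trace_mul_comm, Matrix.mul_assoc (b * q)]

theorem quantum_bayes_rule_general {n : ℕ}
    (σ p q : Matrix (Fin n) (Fin n) ℂ)
    (hσ : σ.PosSemidef)
    (hvq : (σ * q).trace ≠ 0) :
    ((((σ * p).trace)⁻¹ • (hσ.sqrt * p * hσ.sqrt)) * q).trace
      = (((((σ * q).trace)⁻¹ • (hσ.sqrt * q * hσ.sqrt)) * p).trace * (σ * q).trace)
          / (σ * p).trace := by
  simp only [smul_mul_assoc, trace_smul, smul_eq_mul,
    trace_mul_mul_mul_comm hσ.sqrt p hσ.sqrt q]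
  rw [inv_mul_eq_div, inv_mul_eq_div, div_mul_cancel₀ _ hvq]

/-- Quantum Bayes rule for upper conditioning:
`σ|^p ⊨ q = ((σ|^q ⊨ p) * (σ ⊨ q)) / (σ ⊨ p)`. -/
theorem quantum_bayes_rule {n : ℕ}
    (σ p q : Matrix (Fin n) (Fin n) ℂ)
    (hσ : σ.PosSemidef) (hσtr : σ.trace = 1)
    (hp : p.PosSemidef) (hp1 : (1 - p).PosSemidef)
    (hq : q.PosSemidef) (hq1 : (1 - q).PosSemidef)
    (hvp : (σ * p).trace ≠ 0) (hvq : (σ * q).trace ≠ 0) :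
    ((((σ * p).trace)⁻¹ • (hσ.sqrt * p * hσ.sqrt)) * q).trace
      = (((((σ * q).trace)⁻¹ • (hσ.sqrt * q * hσ.sqrt)) * p).trace * (σ * q).trace)
          / (σ * p).trace :=
  quantum_bayes_rule_general σ p q hσ hvq
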